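/- arXiv:2508.05147 — 3 statements merged into one kernel-verified Lean document; each statement's English description precedes it below -/
import Mathlib

section
/- Let β ≥ 1, 0 < R' < R, ν > 0, τ > 0, ω ∈ ℝ and α ∈ ℝ^d, and assume the Diophantine condition |ω(α·k) − 2πn| ≥ ν |k|_1^{−τ} for all k ∈ ℤ^d∖{0} and all n ∈ ℤ. Let η : ℤ^d → ℂ satisfy η_0 = 0 and N_η := ∑_{k∈ℤ^d} e^{βR|k|_β}|η_k| < ∞. Define φ_0 := 0 and φ_k := η_k/(e^{i ω(α·k)} − 1) for k ≠ 0 (these are the Fourier coefficients of the unique zero-average solution φ of the cohomology equation φ(σ+ωα) − φ(σ) = η(σ)). Then ∑_{k∈ℤ^d} e^{βR'|k|_β}|φ_k| ≤ (π/2) · τ^{τβ} · e^{−τβ} · ν^{−1} · (R − R')^{−τβ} · N_η. -/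
/-- For `k ∈ ℤ^d` and `β ≥ 1`, the quantity `|k|_β := ∑ i, |k_i|^(1/β)`. -/
noncomputable def znormBeta {d : ℕ} (β : ℝ) (k : Fin d → ℤ) : ℝ :=
  ∑ i, |(k i : ℝ)| ^ (1 / β)

/-!
Since `|e^{iθ} - 1| = 2|sin(θ/2)|` and `|sin x| ≥ (2/π)|x|` on `[-π/2, π/2]`, the Diophantine
condition bounds each small divisor from below by `(2/π) ν |k|₁^{-τ}`, so
`|φ_k| ≤ (π/2) ν⁻¹ |k|₁^τ |η_k| ≤ (π/2) ν⁻¹ |k|_β^{τβ} |η_k|`. The polynomial loss `|k|_β^{τβ}` is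
absorbed by the exponential gap `e^{-β(R-R')|k|_β}`, using `x^s e^{-cx} ≤ (s/c)^s e^{-s}`.
-/

open Real

lemma Real.rpow_sum_le_sum_rpow {ι : Type*} (s : Finset ι) {f : ι → ℝ} (hf : ∀ i ∈ s, 0 ≤ f i)
    {p : ℝ} (hp0 : 0 < p) (hp1 : p ≤ 1) : (∑ i ∈ s, f i) ^ p ≤ ∑ i ∈ s, f i ^ p := by
  classical
  induction s using Finset.induction_on with
  | empty => simp [zero_rpow hp0.ne']
  | insert a s ha ih =>
    rw [Finset.sum_insert ha, Finset.sum_insert ha]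
    have hfa := hf a (Finset.mem_insert_self a s)
    have hfs : ∀ i ∈ s, 0 ≤ f i := fun i hi => hf i (Finset.mem_insert_of_mem hi)
    calc (f a + ∑ i ∈ s, f i) ^ p ≤ f a ^ p + (∑ i ∈ s, f i) ^ p :=
          rpow_add_le_add_rpow hfa (Finset.sum_nonneg hfs) hp0.le hp1
      _ ≤ f a ^ p + ∑ i ∈ s, f i ^ p := by gcongr; exact ih hfs

lemma znormBeta_nonneg {d : ℕ} (β : ℝ) (k : Fin d → ℤ) : 0 ≤ znormBeta β k :=
  Finset.sum_nonneg fun _ _ => rpow_nonneg (abs_nonneg _) _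

lemma sum_abs_pos_of_ne_zero {d : ℕ} {k : Fin d → ℤ} (hk : k ≠ 0) : 0 < ∑ i, |(k i : ℝ)| := by
  obtain ⟨i, hi⟩ := Function.ne_iff.1 hk
  exact (abs_pos.2 (by exact_mod_cast hi)).trans_le
    (Finset.single_le_sum (fun j _ => abs_nonneg (k j : ℝ)) (Finset.mem_univ i))

lemma sum_abs_le_znormBeta_rpow {d : ℕ} {β : ℝ} (hβ : 1 ≤ β) (k : Fin d → ℤ) :
    ∑ i, |(k i : ℝ)| ≤ znormBeta β k ^ β := by
  have hβ0 : 0 < β := by linarith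
  have hL1 : 0 ≤ ∑ i, |(k i : ℝ)| := Finset.sum_nonneg fun i _ => abs_nonneg _
  have hroot : (∑ i, |(k i : ℝ)|) ^ (1 / β) ≤ znormBeta β k :=
    rpow_sum_le_sum_rpow _ (fun i _ => abs_nonneg _) (by positivity)
      ((div_le_one hβ0).2 hβ)
  calc ∑ i, |(k i : ℝ)| = ((∑ i, |(k i : ℝ)|) ^ (1 / β)) ^ β := by
        rw [← rpow_mul hL1, one_div_mul_cancel hβ0.ne', rpow_one]
    _ ≤ znormBeta β k ^ β := by gcongr

lemma sum_abs_rpow_le_znormBeta_rpow {d : ℕ} {β τ : ℝ} (hβ : 1 ≤ β) (hτ : 0 ≤ τ)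
    (k : Fin d → ℤ) : (∑ i, |(k i : ℝ)|) ^ τ ≤ znormBeta β k ^ (τ * β) := by
  calc (∑ i, |(k i : ℝ)|) ^ τ ≤ (znormBeta β k ^ β) ^ τ :=
        rpow_le_rpow (Finset.sum_nonneg fun i _ => abs_nonneg _)
          (sum_abs_le_znormBeta_rpow hβ k) hτ
    _ = znormBeta β k ^ (τ * β) := by rw [← rpow_mul (znormBeta_nonneg β k), mul_comm]

lemma rpow_mul_exp_neg_mul_le {x s c : ℝ} (hx : 0 ≤ x) (hs : 0 < s) (hc : 0 < c) :
    x ^ s * exp (-(c * x)) ≤ (s / c) ^ s * exp (-s) := by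
  have hy : c * x / s ≤ exp (c * x / s - 1) := by linarith [add_one_le_exp (c * x / s - 1)]
  have hys : (c * x / s) ^ s ≤ exp (c * x - s) :=
    calc (c * x / s) ^ s ≤ exp (c * x / s - 1) ^ s := by gcongr
      _ = exp (c * x - s) := by rw [← exp_mul]; congr 1; field_simp
  calc x ^ s * exp (-(c * x)) = (s / c) ^ s * ((c * x / s) ^ s * exp (-(c * x))) := by
        rw [← mul_assoc, ← mul_rpow (by positivity) (by positivity)]
        congr 2
        field_simp
    _ ≤ (s / c) ^ s * (exp (c * x - s) * exp (-(c * x))) := by gcongr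
    _ = (s / c) ^ s * exp (-s) := by rw [← exp_add]; ring_nf

lemma exp_mul_mul_rpow_le {x β R R' τ : ℝ} (hx : 0 ≤ x) (hβ : 0 < β) (hRR : R' < R)
    (hτ : 0 < τ) :
    exp (β * R' * x) * x ^ (τ * β) ≤
      τ ^ (τ * β) * exp (-(τ * β)) * (R - R') ^ (-(τ * β)) * exp (β * R * x) := by
  have hδ : 0 < R - R' := sub_pos.2 hRR
  have hgap := rpow_mul_exp_neg_mul_le hx (mul_pos hτ hβ) (mul_pos hβ hδ)
  rw [show τ * β / (β * (R - R')) = τ / (R - R') by field_simp,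
    div_rpow hτ.le hδ.le, div_eq_mul_inv, ← rpow_neg hδ.le] at hgap
  calc exp (β * R' * x) * x ^ (τ * β)
      = x ^ (τ * β) * exp (-(β * (R - R') * x)) * exp (β * R * x) := by
        rw [mul_assoc (x ^ (τ * β)), ← exp_add, mul_comm]; congr 2; ring
    _ ≤ τ ^ (τ * β) * exp (-(τ * β)) * (R - R') ^ (-(τ * β)) * exp (β * R * x) := by
        gcongr ?_ * _
        exact hgap.trans_eq (by ring)

lemma two_div_pi_mul_le_norm_exp_I_mul_sub_one {θ ε : ℝ}
    (h : ∀ n : ℤ, ε ≤ |θ - 2 * π * n|) :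
    2 / π * ε ≤ ‖Complex.exp (Complex.I * θ) - 1‖ := by
  set n : ℤ := round (θ / (2 * π))
  have hθn : θ / 2 - n * π = π * (θ / (2 * π) - n) := by field_simp
  have hclose : |θ / 2 - n * π| ≤ π / 2 := by
    rw [hθn, abs_mul, abs_of_pos pi_pos]
    nlinarith [abs_sub_round (θ / (2 * π)), pi_pos]
  have hsin : |sin (θ / 2 - n * π)| = |sin (θ / 2)| := by
    rw [sin_sub_int_mul_pi, abs_mul, abs_neg_one_zpow, one_mul]
  rw [Complex.norm_exp_I_mul_ofReal_sub_one, norm_mul, Real.norm_eq_abs, Real.norm_eq_abs,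
    abs_two, ← hsin]
  calc 2 / π * ε ≤ 2 / π * |θ - 2 * π * n| := by gcongr; exact h n
    _ = 2 * (2 / π * |θ / 2 - n * π|) := by
        rw [show θ - 2 * π * n = 2 * (θ / 2 - n * π) by ring, abs_mul, abs_two]; ring
    _ ≤ 2 * |sin (θ / 2 - n * π)| := by gcongr; exact mul_abs_le_abs_sin hclose

lemma norm_div_exp_I_mul_sub_one_le {θ ε : ℝ} (hε : 0 < ε)
    (h : ∀ n : ℤ, ε ≤ |θ - 2 * π * n|) (z : ℂ) :
    ‖z / (Complex.exp (Complex.I * θ) - 1)‖ ≤ π / 2 * ε⁻¹ * ‖z‖ := by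
  have hD := two_div_pi_mul_le_norm_exp_I_mul_sub_one h
  rw [norm_div]
  calc ‖z‖ / ‖Complex.exp (Complex.I * θ) - 1‖ ≤ ‖z‖ / (2 / π * ε) := by
        gcongr
    _ = π / 2 * ε⁻¹ * ‖z‖ := by field_simp

lemma summable_and_tsum_le_mul_tsum {ι : Type*} {f g : ι → ℝ} {C : ℝ} (hf : ∀ i, 0 ≤ f i)
    (hfg : ∀ i, f i ≤ C * g i) (hg : Summable g) :
    Summable f ∧ ∑' i, f i ≤ C * ∑' i, g i := by
  have hf_sum : Summable f := .of_nonneg_of_le hf hfg (hg.mul_left C)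
  exact ⟨hf_sum, (hf_sum.tsum_le_tsum hfg (hg.mul_left C)).trans_eq tsum_mul_left⟩

theorem cohomology_equation_estimate_general (d : ℕ) (β R R' ν τ : ℝ)
    (hβ : 1 ≤ β) (hRR : R' < R) (hν : 0 < ν) (hτ : 0 < τ)
    (ω : ℝ) (α : Fin d → ℝ)
    (hdio : ∀ k : Fin d → ℤ, k ≠ 0 → ∀ n : ℤ,
      ν * (∑ i, |(k i : ℝ)|) ^ (-τ) ≤ |ω * (∑ i, α i * (k i : ℝ)) - 2 * Real.pi * n|)
    (η : (Fin d → ℤ) → ℂ)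
    (hη : Summable fun k => Real.exp (β * R * znormBeta β k) * ‖η k‖)
    (φ : (Fin d → ℤ) → ℂ)
    (hφ : ∀ k : Fin d → ℤ, φ k = if k = 0 then 0 else
      η k / (Complex.exp (Complex.I * ((ω * ∑ i, α i * (k i : ℝ) : ℝ) : ℂ)) - 1)) :
    Summable (fun k => Real.exp (β * R' * znormBeta β k) * ‖φ k‖) ∧
    (∑' k : Fin d → ℤ, Real.exp (β * R' * znormBeta β k) * ‖φ k‖) ≤
      (Real.pi / 2) * τ ^ (τ * β) * Real.exp (-(τ * β)) * ν⁻¹ * (R - R') ^ (-(τ * β)) *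
        ∑' k : Fin d → ℤ, Real.exp (β * R * znormBeta β k) * ‖η k‖ := by
  refine summable_and_tsum_le_mul_tsum (fun k => by positivity) (fun k => ?_) hη
  rw [hφ k]
  split_ifs with hk
  · simp only [norm_zero, mul_zero]
    positivity
  have hL1 := sum_abs_pos_of_ne_zero hk
  have hφk := norm_div_exp_I_mul_sub_one_le (by positivity) (hdio k hk) (η k)
  rw [mul_inv, ← rpow_neg hL1.le, neg_neg] at hφk
  calc exp (β * R' * znormBeta β k) * ‖η k / _‖
      ≤ exp (β * R' * znormBeta β k) * (π / 2 * (ν⁻¹ * znormBeta β k ^ (τ * β)) * ‖η k‖) := by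
        grw [hφk, sum_abs_rpow_le_znormBeta_rpow hβ hτ.le k]
    _ = π / 2 * ν⁻¹ * (exp (β * R' * znormBeta β k) * znormBeta β k ^ (τ * β)) * ‖η k‖ := by
        ring
    _ ≤ π / 2 * ν⁻¹ * (τ ^ (τ * β) * exp (-(τ * β)) * (R - R') ^ (-(τ * β)) *
          exp (β * R * znormBeta β k)) * ‖η k‖ := by
        grw [exp_mul_mul_rpow_le (znormBeta_nonneg β k) (by linarith) hRR hτ]
    _ = _ := by ring

/-- Solution of the cohomology equation: under the Diophantine condition
`|ω(α·k) - 2πn| ≥ ν|k|₁^{-τ}`, the Fourier coefficients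
`φ_k = η_k/(e^{iω(α·k)} - 1)` (with `φ_0 = 0`) of the unique zero-average
solution of `φ(σ+ωα) - φ(σ) = η(σ)` satisfy
`∑_k e^{βR'|k|_β}|φ_k| ≤ (π/2) τ^{τβ} e^{-τβ} ν^{-1} (R-R')^{-τβ} ∑_k e^{βR|k|_β}|η_k|`. -/
theorem cohomology_equation_estimate (d : ℕ) (hd : 1 ≤ d) (β R R' ν τ : ℝ)
    (hβ : 1 ≤ β) (hR' : 0 < R') (hRR : R' < R) (hν : 0 < ν) (hτ : 0 < τ)
    (ω : ℝ) (α : Fin d → ℝ)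
    (hdio : ∀ k : Fin d → ℤ, k ≠ 0 → ∀ n : ℤ,
      ν * (∑ i, |(k i : ℝ)|) ^ (-τ) ≤ |ω * (∑ i, α i * (k i : ℝ)) - 2 * Real.pi * n|)
    (η : (Fin d → ℤ) → ℂ) (hη0 : η 0 = 0)
    (hη : Summable fun k => Real.exp (β * R * znormBeta β k) * ‖η k‖)
    (φ : (Fin d → ℤ) → ℂ)
    (hφ : ∀ k : Fin d → ℤ, φ k = if k = 0 then 0 else
      η k / (Complex.exp (Complex.I * ((ω * ∑ i, α i * (k i : ℝ) : ℝ) : ℂ)) - 1)) :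
    Summable (fun k => Real.exp (β * R' * znormBeta β k) * ‖φ k‖) ∧
    (∑' k : Fin d → ℤ, Real.exp (β * R' * znormBeta β k) * ‖φ k‖) ≤
      (Real.pi / 2) * τ ^ (τ * β) * Real.exp (-(τ * β)) * ν⁻¹ * (R - R') ^ (-(τ * β)) *
        ∑' k : Fin d → ℤ, Real.exp (β * R * znormBeta β k) * ‖η k‖ :=
  cohomology_equation_estimate_general d β R R' ν τ hβ hRR hν hτ ω α hdio η hη φ hφ
end

section
/- Let d ≥ 2, ν₀ > 0, τ₀ > 0, and let α ∈ ℝ^d satisfy the Diophantine condition |α·k| ≥ ν₀ |k|_1^{−τ₀} for all k ∈ ℤ^d∖{0}. Let τ > d + τ₀. Then the set 𝒟(τ;α) := { ω ∈ ℝ : there exists ν > 0 such that |ω(α·k) − 2πn| ≥ ν |k|_1^{−τ} for all k ∈ ℤ^d∖{0} and all n ∈ ℤ } has full Lebesgue measure in ℝ, i.e. its complement is Lebesgue-null. -/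
/-!
For `k ≠ 0`, the `ω ∈ [-R, R]` with `|ω (α·k) - 2πn| < ν |k|₁^{-τ}` for some `n` lie in
`O(R |α·k| + 1)` intervals of length `2ν |k|₁^{-τ} / |α·k|`. The Diophantine bound on `|α·k|`
makes their total length `O(ν (R + 1/ν₀) |k|₁^{τ₀-τ})`, which is summable over `k ∈ ℤ^d`
because `τ - τ₀ > d`. So the bad set in `[-R, R]` has measure `O(ν)` for every `ν ∈ (0, 1]`,
and is therefore null.
-/

open MeasureTheory Set Real Filter Topology

theorem summable_sum_abs_intCast_rpow_neg {ι : Type*} [Fintype ι] {s : ℝ}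
    (hs : (Fintype.card ι : ℝ) < s) :
    Summable fun k : ι → ℤ => (∑ i, |(k i : ℝ)|) ^ (-s) := by
  let b := Pi.basisFun ℝ ι
  let L := Submodule.span ℤ (Set.range b)
  have hmem (k : ι → ℤ) : (fun i => (k i : ℝ)) ∈ L :=
    (b.mem_span_iff_repr_mem ℤ _).2 fun i => ⟨k i, by simp [b]⟩
  have hrank : (Module.finrank ℤ L : ℝ) ≤ Fintype.card ι := by
    exact_mod_cast finrank_range_le_card (R := ℤ) b
  have hL : Summable fun z : L => ‖z‖ ^ (-s) :=
    ZLattice.summable_norm_rpow L (-s) (by linarith)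
  have hinj : Function.Injective fun k : ι → ℤ => (⟨_, hmem k⟩ : L) := by
    intro k k' h
    funext i
    simpa using congrFun (congrArg Subtype.val h) i
  refine (hL.comp_injective hinj).of_nonneg_of_le (fun _ => by positivity) fun k => ?_
  have hs0 : 0 < s := lt_of_le_of_lt (Nat.cast_nonneg _) hs
  rcases eq_or_ne k 0 with rfl | hk
  · simp only [Pi.zero_apply, Int.cast_zero, abs_zero, Finset.sum_const_zero,
      Real.zero_rpow (neg_ne_zero.2 hs0.ne')]
    exact Real.rpow_nonneg (norm_nonneg _) _
  have hpos : 0 < ‖(fun i => (k i : ℝ))‖ := by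
    rw [norm_pos_iff]
    intro h
    exact hk (funext fun i => by simpa using congrFun h i)
  refine Real.rpow_le_rpow_of_nonpos hpos ?_ (by linarith)
  refine (pi_norm_le_iff_of_nonneg (by positivity)).2 fun i => ?_
  simpa [Real.norm_eq_abs] using
    Finset.single_le_sum (fun j _ => abs_nonneg ((k j : ℝ))) (Finset.mem_univ i)

theorem one_le_sum_abs_intCast {ι : Type*} [Fintype ι] {k : ι → ℤ} (hk : k ≠ 0) :
    1 ≤ ∑ i, |(k i : ℝ)| := by
  obtain ⟨i, hi⟩ := Function.ne_iff.1 hk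
  calc (1 : ℝ) ≤ |(k i : ℝ)| := by exact_mod_cast Int.one_le_abs hi
    _ ≤ ∑ j, |(k j : ℝ)| :=
      Finset.single_le_sum (f := fun j => |(k j : ℝ)|) (fun j _ => abs_nonneg _) (Finset.mem_univ i)

def resonantSet (c a ε : ℝ) : Set ℝ := {ω | ∃ n : ℤ, |ω * a - c * n| < ε}

theorem resonantSet_zero (c a : ℝ) : resonantSet c a 0 = ∅ :=
  eq_empty_of_forall_notMem fun _ ⟨_, hn⟩ => (abs_nonneg _).not_gt hn

theorem volume_Icc_inter_resonantSet_le {c a ε R : ℝ} (hc : 0 < c) (ha : a ≠ 0) (hε : 0 ≤ ε)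
    (hR : 0 ≤ R) :
    volume (Icc (-R) R ∩ resonantSet c a ε) ≤
      ENNReal.ofReal ((2 * (R * |a| + ε) / c + 1) * (2 * (ε / |a|))) := by
  have ha' : 0 < |a| := abs_pos.2 ha
  set N : ℕ := ⌊(R * |a| + ε) / c⌋₊
  have hsub : Icc (-R) R ∩ resonantSet c a ε ⊆
      ⋃ n ∈ Finset.Icc (-(N : ℤ)) N, Metric.ball (c * n / a) (ε / |a|) := by
    rintro ω ⟨hω, n, hn⟩
    have hωa : |ω * a| ≤ R * |a| := by
      rw [abs_mul]; exact mul_le_mul_of_nonneg_right (abs_le.2 hω) ha'.le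
    have hcn : c * |(n : ℝ)| ≤ R * |a| + ε := by
      have := abs_sub_abs_le_abs_sub (c * n) (ω * a)
      rw [abs_sub_comm, abs_mul, abs_of_pos hc] at this
      linarith
    have hnN : n.natAbs ≤ N := by
      refine Nat.le_floor ?_
      rw [Nat.cast_natAbs, Int.cast_abs, le_div_iff₀ hc]
      linarith
    refine mem_biUnion (x := n) (Finset.mem_Icc.2 (by omega)) ?_
    have hdiff : ω - c * n / a = (ω * a - c * n) / a := by field_simp
    rw [Metric.mem_ball, Real.dist_eq, hdiff, abs_div]
    exact div_lt_div_of_pos_right hn ha'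
  calc volume (Icc (-R) R ∩ resonantSet c a ε)
      ≤ ∑ n ∈ Finset.Icc (-(N : ℤ)) N, volume (Metric.ball (c * n / a) (ε / |a|)) :=
        (measure_mono hsub).trans (measure_biUnion_finset_le _ _)
    _ = ENNReal.ofReal ((2 * N + 1 : ℕ) * (2 * (ε / |a|))) := by
        have hcard : (N + 1 - -N : ℤ).toNat = 2 * N + 1 := by omega
        simp only [Real.volume_ball, Finset.sum_const, Int.card_Icc, hcard, nsmul_eq_mul]
        rw [ENNReal.ofReal_mul (Nat.cast_nonneg _), ENNReal.ofReal_natCast]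
    _ ≤ _ := by
        refine ENNReal.ofReal_le_ofReal (mul_le_mul_of_nonneg_right ?_ (by positivity))
        push_cast
        have hN : (N : ℝ) ≤ (R * |a| + ε) / c := Nat.floor_le (by positivity)
        rw [mul_div_assoc]
        linarith

theorem volume_Icc_inter_resonantSet_two_pi_le {a ε R : ℝ} (ha : a ≠ 0) (hε : 0 ≤ ε)
    (hε1 : ε ≤ 1) (hR : 0 ≤ R) :
    volume (Icc (-R) R ∩ resonantSet (2 * π) a ε) ≤ ENNReal.ofReal (2 * ε * (R + 2 / |a|)) := by
  refine (volume_Icc_inter_resonantSet_le two_pi_pos ha hε hR).trans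
    (ENNReal.ofReal_le_ofReal ?_)
  have ha' : 0 < |a| := abs_pos.2 ha
  have hπ : 2 * (R * |a| + ε) / (2 * π) ≤ R * |a| + ε := by
    rw [mul_div_mul_left _ _ two_ne_zero]
    exact div_le_self (by positivity) (by linarith [pi_gt_three])
  calc (2 * (R * |a| + ε) / (2 * π) + 1) * (2 * (ε / |a|))
      ≤ (R * |a| + 2) * (2 * (ε / |a|)) := by gcongr ?_ * _; linarith
    _ = 2 * ε * (R + 2 / |a|) := by field_simp

theorem volume_Icc_inter_resonantSet_le_of_diophantine {a m ν ν₀ τ₀ τ R : ℝ} (hm : 1 ≤ m)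
    (hν : 0 ≤ ν) (hν1 : ν ≤ 1) (hν₀ : 0 < ν₀) (hτ₀ : 0 ≤ τ₀) (hτ : 0 ≤ τ) (hR : 0 ≤ R)
    (ha : ν₀ * m ^ (-τ₀) ≤ |a|) :
    volume (Icc (-R) R ∩ resonantSet (2 * π) a (ν * m ^ (-τ))) ≤
      ENNReal.ofReal (ν * (2 * (R + 2 / ν₀) * m ^ (τ₀ - τ))) := by
  have hm0 : 0 < m := by linarith
  have ha0 : 0 < |a| := (by positivity : 0 < ν₀ * m ^ (-τ₀)).trans_le ha
  have hε1 : ν * m ^ (-τ) ≤ 1 :=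
    mul_le_one₀ hν1 (by positivity) (rpow_le_one_of_one_le_of_nonpos hm (neg_nonpos.2 hτ))
  refine (volume_Icc_inter_resonantSet_two_pi_le (abs_pos.1 ha0) (by positivity) hε1 hR).trans
    (ENNReal.ofReal_le_ofReal ?_)
  have hexp : m ^ (-τ) ≤ m ^ (τ₀ - τ) := rpow_le_rpow_of_exponent_le hm (by linarith)
  have hdiv : m ^ (-τ) / |a| ≤ m ^ (τ₀ - τ) / ν₀ := by
    rw [div_le_div_iff₀ ha0 hν₀, mul_comm _ |a|]
    calc m ^ (-τ) * ν₀ = ν₀ * m ^ (-τ₀) * m ^ (τ₀ - τ) := by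
          rw [mul_assoc, ← rpow_add hm0]; ring_nf
      _ ≤ |a| * m ^ (τ₀ - τ) := by gcongr
  calc 2 * (ν * m ^ (-τ)) * (R + 2 / |a|) = 2 * ν * (R * m ^ (-τ) + 2 * (m ^ (-τ) / |a|)) := by
        ring
    _ ≤ 2 * ν * (R * m ^ (τ₀ - τ) + 2 * (m ^ (τ₀ - τ) / ν₀)) := by gcongr
    _ = ν * (2 * (R + 2 / ν₀) * m ^ (τ₀ - τ)) := by ring

theorem measure_eq_zero_of_forall_Icc_inter {s : Set ℝ}
    (h : ∀ R : ℕ, volume (Icc (-R : ℝ) R ∩ s) = 0) : volume s = 0 := by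
  refine measure_mono_null (fun ω hω => ?_) (measure_iUnion_null h)
  obtain ⟨R, hR⟩ := exists_nat_ge |ω|
  exact mem_iUnion.2 ⟨R, abs_le.1 hR, hω⟩

theorem ENNReal.eq_zero_of_forall_le_ofReal_mul {x : ENNReal} {S : ℝ}
    (h : ∀ ν ∈ Ioc (0 : ℝ) 1, x ≤ ENNReal.ofReal (ν * S)) : x = 0 := by
  have hlim : Tendsto (fun ν : ℝ => ENNReal.ofReal (ν * S)) (𝓝[>] 0) (𝓝 0) := by
    have hcont : Continuous fun ν : ℝ => ENNReal.ofReal (ν * S) :=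
      ENNReal.continuous_ofReal.comp (continuous_mul_const S)
    exact (hcont.tendsto' 0 0 (by simp)).mono_left nhdsWithin_le_nhds
  exact nonpos_iff_eq_zero.1
    (ge_of_tendsto hlim (eventually_of_mem (Ioc_mem_nhdsGT zero_lt_one) h))

theorem full_measure_of_diophantine_omega_general (d : ℕ)
    (ν₀ τ₀ τ : ℝ) (hν₀ : 0 < ν₀) (hτ₀ : 0 < τ₀) (α : Fin d → ℝ)
    (hα : ∀ k : Fin d → ℤ, k ≠ 0 →
      ν₀ * (∑ i, |(k i : ℝ)|) ^ (-τ₀) ≤ |∑ i, α i * (k i : ℝ)|)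
    (hτ : (d : ℝ) + τ₀ < τ) :
    MeasureTheory.volume {ω : ℝ | ¬ ∃ ν > (0 : ℝ), ∀ k : Fin d → ℤ, k ≠ 0 →
      ∀ n : ℤ, ν * (∑ i, |(k i : ℝ)|) ^ (-τ) ≤
        |ω * (∑ i, α i * (k i : ℝ)) - 2 * Real.pi * n|} = 0 := by
  have hτpos : 0 < τ := by linarith [(Nat.cast_nonneg d : (0 : ℝ) ≤ d)]
  refine measure_eq_zero_of_forall_Icc_inter fun R => ?_
  set g : (Fin d → ℤ) → ℝ := fun k => 2 * (R + 2 / ν₀) * (∑ i, |(k i : ℝ)|) ^ (τ₀ - τ)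
  have hg : Summable g := by
    have := summable_sum_abs_intCast_rpow_neg (ι := Fin d) (s := τ - τ₀)
      (by rw [Fintype.card_fin]; linarith)
    simpa only [neg_sub] using this.mul_left (2 * (R + 2 / ν₀))
  refine ENNReal.eq_zero_of_forall_le_ofReal_mul (S := ∑' k, g k) fun ν ⟨hν, hν1⟩ => ?_
  have hk (k : Fin d → ℤ) : volume (Icc (-R : ℝ) R ∩ resonantSet (2 * π) (∑ i, α i * k i)
      (ν * (∑ i, |(k i : ℝ)|) ^ (-τ))) ≤ ENNReal.ofReal (ν * g k) := by
    rcases eq_or_ne k 0 with rfl | hk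
    -- junk value `0 ^ (-τ) = 0`: the resonance width vanishes at `k = 0`
    · simp [Real.zero_rpow (neg_ne_zero.2 hτpos.ne'), resonantSet_zero]
    · exact volume_Icc_inter_resonantSet_le_of_diophantine (one_le_sum_abs_intCast hk) hν.le hν1
        hν₀ hτ₀.le hτpos.le (Nat.cast_nonneg R) (hα k hk)
  calc _ ≤ volume (⋃ k : Fin d → ℤ, Icc (-R : ℝ) R ∩ resonantSet (2 * π) (∑ i, α i * k i)
        (ν * (∑ i, |(k i : ℝ)|) ^ (-τ))) := by
        refine measure_mono fun ω ⟨hωI, hωE⟩ => ?_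
        push Not at hωE
        obtain ⟨k, -, n, hn⟩ := hωE ν hν
        exact mem_iUnion.2 ⟨k, hωI, n, hn⟩
    _ ≤ ∑' k, ENNReal.ofReal (ν * g k) := (measure_iUnion_le _).trans (ENNReal.tsum_le_tsum hk)
    _ = ENNReal.ofReal (ν * ∑' k, g k) := by
        rw [← tsum_mul_left, ENNReal.ofReal_tsum_of_nonneg (fun k => by positivity)
          (hg.mul_left ν)]

/-- If `α ∈ ℝ^d` is Diophantine with exponent `τ₀` and `τ > d + τ₀`, then the
set of `ω ∈ ℝ` satisfying `|ω(α·k) - 2πn| ≥ ν|k|₁^{-τ}` for some `ν > 0` and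
all `k ≠ 0`, `n ∈ ℤ`, has full Lebesgue measure: its complement is null. -/
theorem full_measure_of_diophantine_omega (d : ℕ) (hd : 2 ≤ d)
    (ν₀ τ₀ τ : ℝ) (hν₀ : 0 < ν₀) (hτ₀ : 0 < τ₀) (α : Fin d → ℝ)
    (hα : ∀ k : Fin d → ℤ, k ≠ 0 →
      ν₀ * (∑ i, |(k i : ℝ)|) ^ (-τ₀) ≤ |∑ i, α i * (k i : ℝ)|)
    (hτ : (d : ℝ) + τ₀ < τ) :
    MeasureTheory.volume {ω : ℝ | ¬ ∃ ν > (0 : ℝ), ∀ k : Fin d → ℤ, k ≠ 0 →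
      ∀ n : ℤ, ν * (∑ i, |(k i : ℝ)|) ^ (-τ) ≤
        |ω * (∑ i, α i * (k i : ℝ)) - 2 * Real.pi * n|} = 0 :=
  full_measure_of_diophantine_omega_general d ν₀ τ₀ τ hν₀ hτ₀ α hα hτ
end

section
/- Let β ≥ 1 and R > 0. If f and g are smooth (2π)ℤ^d-periodic functions with ‖f‖_{β,R} < ∞ and ‖g‖_{β,R} < ∞, then ‖fg‖_{β,R} ≤ ‖f‖_{β,R} · ‖g‖_{β,R} (Banach algebra property of the Gevrey norm of Marco–Sauzin). -/
open scoped BigOperators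

/-- The partial derivative `∂_i f` of a function `f : ℝ^d → ℝ`. -/
noncomputable def gevPDeriv {d : ℕ} (i : Fin d) (f : (Fin d → ℝ) → ℝ) :
    (Fin d → ℝ) → ℝ :=
  fun x => fderiv ℝ f x (Pi.single i 1)

/-- The multi-index partial derivative `∂^k f = ∂_1^{k_1} ⋯ ∂_d^{k_d} f`. -/
noncomputable def gevMDeriv {d : ℕ} (k : Fin d → ℕ) (f : (Fin d → ℝ) → ℝ) :
    (Fin d → ℝ) → ℝ :=
  (List.finRange d).foldr (fun i g => (gevPDeriv i)^[k i] g) f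

/-- The sup-norm `‖f‖_{C⁰} = sup_x |f x|`. -/
noncomputable def supNorm {d : ℕ} (f : (Fin d → ℝ) → ℝ) : ℝ := ⨆ x, |f x|

/-- The `k`-th term `(R^{β|k|₁}/(k!)^β)‖∂^k f‖_{C⁰}` of the Gevrey norm. -/
noncomputable def gevreyTerm {d : ℕ} (β R : ℝ) (f : (Fin d → ℝ) → ℝ)
    (k : Fin d → ℕ) : ℝ :=
  R ^ (β * ∑ i, (k i : ℝ)) / (∏ i, ((k i).factorial : ℝ)) ^ β * supNorm (gevMDeriv k f)

/-- The Gevrey norm `‖f‖_{β,R} = ∑_{k∈ℕ^d} (R^{β|k|₁}/(k!)^β)‖∂^k f‖_{C⁰}`. -/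
noncomputable def gevreyNorm {d : ℕ} (β R : ℝ) (f : (Fin d → ℝ) → ℝ) : ℝ :=
  ∑' k : Fin d → ℕ, gevreyTerm β R f k

/-- `f : ℝ^d → ℝ` is `(2π)ℤ^d`-periodic. -/
def Periodic2pi {d : ℕ} (f : (Fin d → ℝ) → ℝ) : Prop :=
  ∀ (x : Fin d → ℝ) (m : Fin d → ℤ), f (fun i => x i + 2 * Real.pi * m i) = f x


section basic
variable {d : ℕ} {f g : (Fin d → ℝ) → ℝ} {i : Fin d}

theorem contDiff_gevPDeriv (hf : ContDiff ℝ (⊤ : ℕ∞) f) (i : Fin d) :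
    ContDiff ℝ (⊤ : ℕ∞) (gevPDeriv i f) :=
  (hf.fderiv_right (m := (⊤ : ℕ∞)) (by simp)).clm_apply contDiff_const

theorem gevPDeriv_add (hf : ContDiff ℝ (⊤ : ℕ∞) f) (hg : ContDiff ℝ (⊤ : ℕ∞) g) :
    gevPDeriv i (f + g) = gevPDeriv i f + gevPDeriv i g := by
  funext x
  have : fderiv ℝ (fun y => f y + g y) x = fderiv ℝ f x + fderiv ℝ g x :=
    fderiv_fun_add (hf.differentiable (by simp) x) (hg.differentiable (by simp) x)
  simp [gevPDeriv, Pi.add_def, this]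

theorem gevPDeriv_smul (hf : ContDiff ℝ (⊤ : ℕ∞) f) (c : ℝ) :
    gevPDeriv i (c • f) = c • gevPDeriv i f := by
  funext x
  have : fderiv ℝ (fun y => c • f y) x = c • fderiv ℝ f x :=
    fderiv_fun_const_smul (hf.differentiable (by simp) x) c
  show fderiv ℝ (c • f) x (Pi.single i 1) = c * fderiv ℝ f x (Pi.single i 1)
  rw [Pi.smul_def, this]
  simp

theorem gevPDeriv_mul (hf : ContDiff ℝ (⊤ : ℕ∞) f) (hg : ContDiff ℝ (⊤ : ℕ∞) g) :
    gevPDeriv i (f * g) = gevPDeriv i f * g + f * gevPDeriv i g := by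
  funext x
  have : fderiv ℝ (fun y => f y * g y) x = f x • fderiv ℝ g x + g x • fderiv ℝ f x :=
    fderiv_fun_mul (hf.differentiable (by simp) x) (hg.differentiable (by simp) x)
  have h2 : gevPDeriv i (f * g) x = (f x • fderiv ℝ g x + g x • fderiv ℝ f x) (Pi.single i 1) := by
    rw [gevPDeriv, Pi.mul_def, this]
  simp only [h2, ContinuousLinearMap.add_apply, ContinuousLinearMap.smul_apply]
  simp [gevPDeriv]
  ring

theorem gevPDeriv_sum {ι : Type*} (s : Finset ι) (F : ι → (Fin d → ℝ) → ℝ)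
    (hF : ∀ j ∈ s, ContDiff ℝ (⊤ : ℕ∞) (F j)) :
    gevPDeriv i (∑ j ∈ s, F j) = ∑ j ∈ s, gevPDeriv i (F j) := by
  funext x
  have : fderiv ℝ (fun y => ∑ j ∈ s, F j y) x = ∑ j ∈ s, fderiv ℝ (F j) x :=
    fderiv_fun_sum (fun j hj => (hF j hj).differentiable (by simp) x)
  have e : (∑ j ∈ s, F j) = fun y => ∑ j ∈ s, F j y := funext fun y => Finset.sum_apply y s F
  rw [Finset.sum_apply]
  show fderiv ℝ (∑ j ∈ s, F j) x (Pi.single i 1) = ∑ j ∈ s, gevPDeriv i (F j) x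
  rw [e, this]
  simp [gevPDeriv]

end basic


section periodic
variable {d : ℕ} {f g : (Fin d → ℝ) → ℝ} {i : Fin d}

theorem fderiv_shift (f : (Fin d → ℝ) → ℝ) (c x : Fin d → ℝ) :
    fderiv ℝ (fun y => f (y + c)) x = fderiv ℝ f (x + c) := by
  have h1 : HasFDerivAt (fun y : Fin d → ℝ => y + c)
      (ContinuousLinearMap.id ℝ (Fin d → ℝ)) x := (hasFDerivAt_id x).add_const c
  by_cases hdiff : DifferentiableAt ℝ f (x + c)
  · have h2 : HasFDerivAt (fun y => f (y + c)) (fderiv ℝ f (x + c)) x := by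
      simpa [Function.comp_def] using hdiff.hasFDerivAt.comp x h1
    exact h2.fderiv
  · have hdiff2 : ¬ DifferentiableAt ℝ (fun y => f (y + c)) x := by
      intro h
      apply hdiff
      have h3 : DifferentiableAt ℝ (fun z : Fin d → ℝ => z + -c) (x + c) :=
        differentiableAt_id.add_const (-c)
      have h4 : DifferentiableAt ℝ (fun y => f (y + c)) ((x + c) + -c) := by
        simpa using h
      have := h4.comp (x + c) h3
      simpa [Function.comp_def] using this
    rw [fderiv_zero_of_not_differentiableAt hdiff,
      fderiv_zero_of_not_differentiableAt hdiff2]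

theorem Periodic2pi.gevPDeriv_per (hp : Periodic2pi f) : Periodic2pi (gevPDeriv i f) := by
  intro x m
  set c : Fin d → ℝ := fun j => 2 * Real.pi * m j with hc
  have hfe : (fun y : Fin d → ℝ => f (y + c)) = f := funext fun y => hp y m
  show fderiv ℝ f (x + c) (Pi.single i 1) = fderiv ℝ f x (Pi.single i 1)
  rw [← fderiv_shift f c x, hfe]

theorem Periodic2pi.mul_per (hp : Periodic2pi f) (hq : Periodic2pi g) :
    Periodic2pi (f * g) := fun x m => by
  simp only [Pi.mul_apply, hp x m, hq x m]

end periodic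


noncomputable def gevDl {d : ℕ} (l : List (Fin d)) (e : Fin d → ℕ)
    (f : (Fin d → ℝ) → ℝ) : (Fin d → ℝ) → ℝ :=
  l.foldr (fun i g => (gevPDeriv i)^[e i] g) f

section dl
variable {d : ℕ} {f g : (Fin d → ℝ) → ℝ} {i : Fin d}

theorem gevMDeriv_eq_gevDl (k : Fin d → ℕ) (f : (Fin d → ℝ) → ℝ) :
    gevMDeriv k f = gevDl (List.finRange d) k f := rfl

theorem gevDl_nil (e : Fin d → ℕ) : gevDl [] e f = f := rfl

theorem gevDl_cons (l : List (Fin d)) (e : Fin d → ℕ) :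
    gevDl (i :: l) e f = (gevPDeriv i)^[e i] (gevDl l e f) := rfl

theorem contDiff_gevPDeriv_iter (hf : ContDiff ℝ (⊤ : ℕ∞) f) (i : Fin d) (n : ℕ) :
    ContDiff ℝ (⊤ : ℕ∞) ((gevPDeriv i)^[n] f) := by
  induction n with
  | zero => exact hf
  | succ n ih => rw [Function.iterate_succ_apply']; exact contDiff_gevPDeriv ih i

theorem Periodic2pi.gevPDeriv_iter_per (hp : Periodic2pi f) (i : Fin d) (n : ℕ) :
    Periodic2pi ((gevPDeriv i)^[n] f) := by
  induction n with
  | zero => exact hp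
  | succ n ih => rw [Function.iterate_succ_apply']; exact ih.gevPDeriv_per

theorem contDiff_gevDl (hf : ContDiff ℝ (⊤ : ℕ∞) f) (l : List (Fin d)) (e : Fin d → ℕ) :
    ContDiff ℝ (⊤ : ℕ∞) (gevDl l e f) := by
  induction l with
  | nil => exact hf
  | cons i l ih => rw [gevDl_cons]; exact contDiff_gevPDeriv_iter ih i (e i)

theorem Periodic2pi.gevDl_per (hp : Periodic2pi f) (l : List (Fin d)) (e : Fin d → ℕ) :
    Periodic2pi (_root_.gevDl l e f) := by
  induction l with
  | nil => exact hp
  | cons i l ih => rw [gevDl_cons]; exact Periodic2pi.gevPDeriv_iter_per ih i (e i)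

theorem gevDl_congr {l : List (Fin d)} {e e' : Fin d → ℕ} (h : ∀ i ∈ l, e i = e' i) :
    gevDl l e f = gevDl l e' f := by
  induction l with
  | nil => rfl
  | cons i l ih =>
    rw [gevDl_cons, gevDl_cons, ih fun j hj => h j (List.mem_cons_of_mem i hj),
      h i List.mem_cons_self]

/-- One-dimensional Leibniz rule for iterated partial derivatives. -/
theorem gevPDeriv_iter_mul (hf : ContDiff ℝ (⊤ : ℕ∞) f) (hg : ContDiff ℝ (⊤ : ℕ∞) g) (i : Fin d) (n : ℕ) :
    (gevPDeriv i)^[n] (f * g) = ∑ r ∈ Finset.range (n + 1),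
      ((n.choose r : ℕ) : ℝ) • ((gevPDeriv i)^[r] f * (gevPDeriv i)^[n - r] g) := by
  induction n with
  | zero => simp
  | succ n ih =>
    rw [Function.iterate_succ_apply', ih,
      gevPDeriv_sum (Finset.range (n + 1))
        (fun r => ((n.choose r : ℕ) : ℝ) • ((gevPDeriv i)^[r] f * (gevPDeriv i)^[n - r] g))
        (fun r _ => by
          exact (((contDiff_gevPDeriv_iter hf i r).mul
            (contDiff_gevPDeriv_iter hg i (n - r))).const_smul ((n.choose r : ℕ) : ℝ)))]
    have step : ∀ r ∈ Finset.range (n + 1),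
        gevPDeriv i (((n.choose r : ℕ) : ℝ) • ((gevPDeriv i)^[r] f * (gevPDeriv i)^[n - r] g))
        = ((n.choose r : ℕ) : ℝ) • (((gevPDeriv i)^[r + 1] f * (gevPDeriv i)^[n + 1 - (r + 1)] g)
            + ((gevPDeriv i)^[r] f * (gevPDeriv i)^[n + 1 - r] g)) := by
      intro r hr
      have hr' : r ≤ n := Nat.lt_succ_iff.mp (Finset.mem_range.mp hr)
      have hfr := contDiff_gevPDeriv_iter hf i r
      have hgr := contDiff_gevPDeriv_iter hg i (n - r)
      rw [gevPDeriv_smul (f := (gevPDeriv i)^[r] f * (gevPDeriv i)^[n - r] g)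
        (by exact hfr.mul hgr) ((n.choose r : ℕ) : ℝ), gevPDeriv_mul hfr hgr]
      have h2 : n + 1 - (r + 1) = n - r := by omega
      have h3 : n + 1 - r = (n - r) + 1 := by omega
      rw [h2, h3, Function.iterate_succ_apply' (gevPDeriv i) r f,
        Function.iterate_succ_apply' (gevPDeriv i) (n - r) g]
    rw [Finset.sum_congr rfl step]
    -- now combine with Pascal's rule
    set T : ℕ → (Fin d → ℝ) → ℝ :=
      fun r => (gevPDeriv i)^[r] f * (gevPDeriv i)^[n + 1 - r] g with hT
    have lhs_eq : ∑ r ∈ Finset.range (n + 1),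
        ((n.choose r : ℕ) : ℝ) • (T (r + 1) + T r)
        = ∑ r ∈ Finset.range (n + 1), ((n.choose r : ℕ) : ℝ) • T (r + 1)
          + ∑ r ∈ Finset.range (n + 1), ((n.choose r : ℕ) : ℝ) • T r := by
      rw [← Finset.sum_add_distrib]
      exact Finset.sum_congr rfl fun r _ => smul_add _ _ _
    rw [lhs_eq]
    have rhs_eq : ∑ r ∈ Finset.range (n + 1 + 1), (((n + 1).choose r : ℕ) : ℝ) • T r
        = ∑ r ∈ Finset.range (n + 1), (((n + 1).choose (r + 1) : ℕ) : ℝ) • T (r + 1)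
          + (((n + 1).choose 0 : ℕ) : ℝ) • T 0 := Finset.sum_range_succ' _ _
    rw [rhs_eq]
    have pascal : ∀ r, (((n + 1).choose (r + 1) : ℕ) : ℝ) • T (r + 1)
        = ((n.choose r : ℕ) : ℝ) • T (r + 1) + ((n.choose (r + 1) : ℕ) : ℝ) • T (r + 1) := by
      intro r
      rw [Nat.choose_succ_succ, Nat.cast_add, add_smul]
    simp only [pascal, Finset.sum_add_distrib]
    have e2 : ∑ r ∈ Finset.range (n + 1), ((n.choose r : ℕ) : ℝ) • T r
        = ∑ r ∈ Finset.range n, ((n.choose (r + 1) : ℕ) : ℝ) • T (r + 1)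
          + ((n.choose 0 : ℕ) : ℝ) • T 0 := Finset.sum_range_succ' _ _
    have e3 : ∑ r ∈ Finset.range (n + 1), ((n.choose (r + 1) : ℕ) : ℝ) • T (r + 1)
        = ∑ r ∈ Finset.range n, ((n.choose (r + 1) : ℕ) : ℝ) • T (r + 1) := by
      rw [Finset.sum_range_succ, Nat.choose_succ_self, Nat.cast_zero, zero_smul, add_zero]
    rw [e2, e3]
    simp only [Nat.choose_zero_right, Nat.cast_one, one_smul]
    abel

end dl

section iterhelp
variable {d : ℕ} {f g : (Fin d → ℝ) → ℝ} {i : Fin d}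

theorem gevPDeriv_iter_smul (hf : ContDiff ℝ (⊤ : ℕ∞) f) (c : ℝ) (n : ℕ) :
    (gevPDeriv i)^[n] (c • f) = c • (gevPDeriv i)^[n] f := by
  induction n with
  | zero => rfl
  | succ n ih =>
    rw [Function.iterate_succ_apply', Function.iterate_succ_apply', ih,
      gevPDeriv_smul (contDiff_gevPDeriv_iter hf i n) c]

theorem gevPDeriv_iter_sum {ι : Type*} (s : Finset ι) (F : ι → (Fin d → ℝ) → ℝ)
    (hF : ∀ j ∈ s, ContDiff ℝ (⊤ : ℕ∞) (F j)) (n : ℕ) :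
    (gevPDeriv i)^[n] (∑ j ∈ s, F j) = ∑ j ∈ s, (gevPDeriv i)^[n] (F j) := by
  induction n with
  | zero => rfl
  | succ n ih =>
    rw [Function.iterate_succ_apply', ih,
      gevPDeriv_sum s (fun j => (gevPDeriv i)^[n] (F j))
        (fun j hj => contDiff_gevPDeriv_iter (hF j hj) i n)]
    exact Finset.sum_congr rfl fun j _ => (Function.iterate_succ_apply' _ _ _).symm

end iterhelp

section leibniz
variable {d : ℕ} {f g : (Fin d → ℝ) → ℝ}

/-- Multivariate Leibniz rule along a duplicate-free list of coordinates. -/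
theorem gevDl_mul (hf : ContDiff ℝ (⊤ : ℕ∞) f) (hg : ContDiff ℝ (⊤ : ℕ∞) g) :
    ∀ (l : List (Fin d)), l.Nodup → ∀ (m : Fin d → ℕ), (∀ i, i ∉ l → m i = 0) →
    gevDl l m (f * g) = ∑ j ∈ Fintype.piFinset (fun i => Finset.range (m i + 1)),
      ((∏ i, (m i).choose (j i) : ℕ) : ℝ) • (gevDl l j f * gevDl l (m - j) g) := by
  intro l
  induction l with
  | nil =>
    intro _ m hm
    have hm0 : m = 0 := funext fun i => hm i List.not_mem_nil
    subst hm0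
    have hbox : Fintype.piFinset (fun i : Fin d => Finset.range ((0 : Fin d → ℕ) i + 1))
        = {(0 : Fin d → ℕ)} := by
      ext j
      simp [Fintype.mem_piFinset, Nat.lt_one_iff, funext_iff]
    rw [hbox, Finset.sum_singleton]
    simp [gevDl_nil]
  | cons i l ih =>
    intro hnd m hm
    have hil : i ∉ l := (List.nodup_cons.mp hnd).1
    have hndl : l.Nodup := (List.nodup_cons.mp hnd).2
    have hne : ∀ i'' ∈ l, i'' ≠ i := fun i'' hi'' h => hil (h ▸ hi'')
    set m' : Fin d → ℕ := Function.update m i 0 with hm'def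
    have hm' : ∀ j, j ∉ l → m' j = 0 := by
      intro j hj
      by_cases hji : j = i
      · subst hji; simp [hm'def]
      · rw [hm'def, Function.update_of_ne hji]
        exact hm j (by simp [hji, hj])
    have hcongr : ∀ j ∈ l, m j = m' j := fun j hj => by
      rw [hm'def, Function.update_of_ne (fun h => hil (by rw [← h]; exact hj))]
    rw [gevDl_cons, gevDl_congr hcongr, ih hndl m' hm']
    have hFsm : ∀ j : Fin d → ℕ, ContDiff ℝ (⊤ : ℕ∞)
        ((fun (j : Fin d → ℕ) => ((∏ i', (m' i').choose (j i') : ℕ) : ℝ) •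
          (gevDl l j f * gevDl l (m' - j) g)) j) := fun j => by
      exact ((contDiff_gevDl hf l j).mul (contDiff_gevDl hg l (m' - j))).const_smul
        ((∏ i', (m' i').choose (j i') : ℕ) : ℝ)
    rw [gevPDeriv_iter_sum _ _ (fun j _ => hFsm j) (m i)]
    -- rewrite each summand
    have step : ∀ j ∈ Fintype.piFinset (fun i' => Finset.range (m' i' + 1)),
        (gevPDeriv i)^[m i] (((∏ i', (m' i').choose (j i') : ℕ) : ℝ) •
          (gevDl l j f * gevDl l (m' - j) g))
        = ∑ r ∈ Finset.range (m i + 1),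
            ((∏ i', (m i').choose (Function.update j i r i') : ℕ) : ℝ) •
            (gevDl (i :: l) (Function.update j i r) f *
              gevDl (i :: l) (m - Function.update j i r) g) := by
      intro j hj
      have hji : j i = 0 := by
        have := (Fintype.mem_piFinset.mp hj) i
        simp [hm'def, Nat.lt_one_iff] at this
        exact this
      have hDf := contDiff_gevDl hf l j
      have hDg := contDiff_gevDl hg l (m' - j)
      rw [gevPDeriv_iter_smul (by exact hDf.mul hDg) _ _,
        gevPDeriv_iter_mul hDf hDg i (m i), Finset.smul_sum]
      refine Finset.sum_congr rfl fun r hr => ?_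
      have hrm : r ≤ m i := Nat.lt_succ_iff.mp (Finset.mem_range.mp hr)
      -- identify the iterated derivatives
      have idf : (gevPDeriv i)^[r] (gevDl l j f)
          = gevDl (i :: l) (Function.update j i r) f := by
        rw [gevDl_cons, Function.update_self,
          gevDl_congr (fun i' hi' => (Function.update_of_ne (hne i' hi') r j).symm)]
      have idg : (gevPDeriv i)^[m i - r] (gevDl l (m' - j) g)
          = gevDl (i :: l) (m - Function.update j i r) g := by
        rw [gevDl_cons]
        have h1 : (m - Function.update j i r) i = m i - r := by
          simp [Pi.sub_apply, Function.update_self]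
        rw [h1, gevDl_congr (l := l) (e := m' - j) (e' := m - Function.update j i r)
          (fun i' hi' => ?_)]
        simp [Pi.sub_apply, Function.update_of_ne (hne i' hi'), hm'def]
      rw [idf, idg, smul_smul]
      congr 1
      -- coefficients
      have hcoef1 : (fun i' => (m i').choose (Function.update j i r i'))
          = Function.update (fun i' => (m i').choose (j i')) i ((m i).choose r) := by
        funext i'
        by_cases h : i' = i
        · subst h; simp
        · simp [Function.update_of_ne h]
      have hcoef2 : (fun i' => (m' i').choose (j i'))
          = Function.update (fun i' => (m i').choose (j i')) i 1 := by
        funext i'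
        by_cases h : i' = i
        · subst h; simp [hm'def, hji]
        · simp [Function.update_of_ne h, hm'def]
      rw [show (∏ i', (m i').choose (Function.update j i r i')) =
          ∏ i', Function.update (fun i' => (m i').choose (j i')) i ((m i).choose r) i' by
            rw [← hcoef1],
        show (∏ i', (m' i').choose (j i')) = ∏ i',
            Function.update (fun i' => (m i').choose (j i')) i 1 i' by rw [← hcoef2],
        Finset.prod_update_of_mem (Finset.mem_univ i),
        Finset.prod_update_of_mem (Finset.mem_univ i)]
      push_cast
      ring
    rw [Finset.sum_congr rfl step]
    -- reindex the double sum
    rw [← Finset.sum_product']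
    refine Finset.sum_bij' (fun p _ => Function.update p.1 i p.2)
      (fun J _ => (Function.update J i 0, J i)) ?_ ?_ ?_ ?_ ?_
    · intro p hp
      rw [Fintype.mem_piFinset]
      intro i'
      show Function.update p.1 i p.2 i' ∈ Finset.range (m i' + 1)
      obtain ⟨hp1, hp2⟩ := Finset.mem_product.mp hp
      by_cases h : i' = i
      · subst h; simpa using hp2
      · rw [Function.update_of_ne h, Finset.mem_range]
        have := (Fintype.mem_piFinset.mp hp1) i'
        rw [Finset.mem_range, hm'def, Function.update_of_ne h] at this
        exact this
    · intro J hJ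
      rw [Finset.mem_product]
      constructor
      · rw [Fintype.mem_piFinset]
        intro i'
        show Function.update J i 0 i' ∈ Finset.range (m' i' + 1)
        by_cases h : i' = i
        · subst h; simp [hm'def]
        · rw [Function.update_of_ne h, Finset.mem_range, hm'def, Function.update_of_ne h]
          exact Finset.mem_range.mp ((Fintype.mem_piFinset.mp hJ) i')
      · exact (Fintype.mem_piFinset.mp hJ) i
    · intro p hp
      obtain ⟨hp1, _⟩ := Finset.mem_product.mp hp
      have hpi : p.1 i = 0 := by
        have := (Fintype.mem_piFinset.mp hp1) i
        simp [hm'def, Nat.lt_one_iff] at this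
        exact this
      ext i'
      · by_cases h : i' = i
        · subst h; simp [hpi]
        · simp [Function.update_of_ne h]
      · simp
    · intro J hJ
      dsimp only
      funext i'
      by_cases h : i' = i
      · subst h; simp
      · simp [Function.update_of_ne h]
    · intro p hp
      rfl

end leibniz


section supnorm
variable {d : ℕ} {f : (Fin d → ℝ) → ℝ}

theorem supNorm_nonneg (f : (Fin d → ℝ) → ℝ) : 0 ≤ supNorm f :=
  Real.iSup_nonneg fun _ => abs_nonneg _

theorem Periodic2pi.bddAbove (hc : Continuous f) (hp : Periodic2pi f) :
    BddAbove (Set.range fun x => |f x|) := by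
  have hB : IsCompact (Set.Icc (0 : Fin d → ℝ) (fun _ => 2 * Real.pi)) := isCompact_Icc
  obtain ⟨C, hC⟩ := (hB.image_of_continuousOn hc.abs.continuousOn).bddAbove
  refine ⟨C, ?_⟩
  rintro y ⟨x, rfl⟩
  have h2π : (0 : ℝ) < 2 * Real.pi := by positivity
  set mm : Fin d → ℤ := fun i => -⌊x i / (2 * Real.pi)⌋ with hmm
  have hval : ∀ i, x i + 2 * Real.pi * ((mm i : ℤ) : ℝ)
      = 2 * Real.pi * Int.fract (x i / (2 * Real.pi)) := by
    intro i
    rw [hmm, Int.fract]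
    push_cast
    field_simp
    ring
  have hyB : (fun i => x i + 2 * Real.pi * ((mm i : ℤ) : ℝ))
      ∈ Set.Icc (0 : Fin d → ℝ) (fun _ => 2 * Real.pi) := by
    constructor <;> intro i <;> dsimp only
    · show (0 : ℝ) ≤ x i + 2 * Real.pi * ((mm i : ℤ) : ℝ)
      rw [hval i]
      exact mul_nonneg h2π.le (Int.fract_nonneg _)
    · rw [hval i]
      calc 2 * Real.pi * Int.fract (x i / (2 * Real.pi))
          ≤ 2 * Real.pi * 1 := by
            exact mul_le_mul_of_nonneg_left (Int.fract_lt_one _).le h2π.le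
        _ = 2 * Real.pi := mul_one _
  have : |f x| = |f (fun i => x i + 2 * Real.pi * ((mm i : ℤ) : ℝ))| := by
    rw [hp x mm]
  show |f x| ≤ C
  rw [this]
  exact hC ⟨_, hyB, rfl⟩

theorem abs_le_supNorm (hb : BddAbove (Set.range fun x => |f x|)) (x : Fin d → ℝ) :
    |f x| ≤ supNorm f := le_ciSup hb x

theorem supNorm_le {C : ℝ} (hC : ∀ x, |f x| ≤ C) : supNorm f ≤ C := ciSup_le hC

end supnorm

instance gevHasAntidiagonal (d : ℕ) : Finset.HasAntidiagonal (Fin d → ℕ) where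
  antidiagonal n := (Fintype.piFinset fun i => Finset.HasAntidiagonal.antidiagonal (n i)).map
    ⟨fun p => (fun i => (p i).1, fun i => (p i).2), fun p q h => funext fun i =>
      Prod.ext (congrFun (congrArg Prod.fst h) i) (congrFun (congrArg Prod.snd h) i)⟩
  mem_antidiagonal := by
    intro n a
    simp only [Finset.mem_map, Fintype.mem_piFinset, Function.Embedding.coeFn_mk]
    constructor
    · rintro ⟨q, hq, rfl⟩
      funext i
      exact Finset.HasAntidiagonal.mem_antidiagonal.mp (hq i)
    · intro h
      refine ⟨fun i => (a.1 i, a.2 i), fun i => Finset.HasAntidiagonal.mem_antidiagonal.mpr (congrFun h i), ?_⟩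
      exact Prod.ext rfl rfl



section main
variable {d : ℕ} {β R : ℝ} {f g : (Fin d → ℝ) → ℝ}

theorem gevreyTerm_nonneg (hR : 0 < R) (β : ℝ) (f : (Fin d → ℝ) → ℝ) (k : Fin d → ℕ) :
    0 ≤ gevreyTerm β R f k :=
  mul_nonneg (div_nonneg (Real.rpow_nonneg hR.le _)
    (Real.rpow_nonneg (Finset.prod_nonneg fun i _ => Nat.cast_nonneg _) _)) (supNorm_nonneg _)

theorem gevMDeriv_mul (hf : ContDiff ℝ (⊤ : ℕ∞) f) (hg : ContDiff ℝ (⊤ : ℕ∞) g) (k : Fin d → ℕ) :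
    gevMDeriv k (f * g) = ∑ j ∈ Fintype.piFinset (fun i => Finset.range (k i + 1)),
      ((∏ i, (k i).choose (j i) : ℕ) : ℝ) • (gevMDeriv j f * gevMDeriv (k - j) g) := by
  exact gevDl_mul hf hg (List.finRange d) (List.nodup_finRange d) k
    (fun i hi => absurd (List.mem_finRange i) hi)

theorem gev_coeff_le (hβ : 1 ≤ β) (hR : 0 < R) {k j : Fin d → ℕ} (hjk : ∀ i, j i ≤ k i) :
    R ^ (β * ∑ i, (k i : ℝ)) / (∏ i, ((k i).factorial : ℝ)) ^ β
      * ((∏ i, (k i).choose (j i) : ℕ) : ℝ)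
    ≤ (R ^ (β * ∑ i, (j i : ℝ)) / (∏ i, ((j i).factorial : ℝ)) ^ β)
      * (R ^ (β * ∑ i, (((k - j) i : ℕ) : ℝ)) / (∏ i, (((k - j) i).factorial : ℝ)) ^ β) := by
  set P : ℝ := ((∏ i, (k i).choose (j i) : ℕ) : ℝ) with hPdef
  set A : ℝ := R ^ (β * ∑ i, (j i : ℝ)) with hAdef
  set B : ℝ := R ^ (β * ∑ i, (((k - j) i : ℕ) : ℝ)) with hBdef
  set Q1 : ℝ := (∏ i, ((j i).factorial : ℝ)) ^ β with hQ1def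
  set Q2 : ℝ := (∏ i, (((k - j) i).factorial : ℝ)) ^ β with hQ2def
  have hP1 : 1 ≤ P := by
    rw [hPdef]
    exact_mod_cast Finset.one_le_prod' fun i _ => Nat.succ_le_of_lt (Nat.choose_pos (hjk i))
  have hPpos : 0 < P := lt_of_lt_of_le one_pos hP1
  have hApos : 0 < A := Real.rpow_pos_of_pos hR _
  have hBpos : 0 < B := Real.rpow_pos_of_pos hR _
  have hprod1 : (0:ℝ) < ∏ i, ((j i).factorial : ℝ) :=
    Finset.prod_pos fun i _ => by exact_mod_cast Nat.factorial_pos (j i)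
  have hprod2 : (0:ℝ) < ∏ i, (((k - j) i).factorial : ℝ) :=
    Finset.prod_pos fun i _ => by exact_mod_cast Nat.factorial_pos _
  have hQ1pos : 0 < Q1 := Real.rpow_pos_of_pos hprod1 _
  have hQ2pos : 0 < Q2 := Real.rpow_pos_of_pos hprod2 _
  have hPβ : P ≤ P ^ β := by
    calc P = P ^ (1:ℝ) := (Real.rpow_one P).symm
    _ ≤ P ^ β := Real.rpow_le_rpow_of_exponent_le hP1 hβ
  have hPβpos : 0 < P ^ β := Real.rpow_pos_of_pos hPpos _
  -- split the numerator
  have hsum : (β * ∑ i, (k i : ℝ)) = (β * ∑ i, (j i : ℝ)) + (β * ∑ i, (((k - j) i : ℕ) : ℝ)) := by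
    rw [← mul_add, ← Finset.sum_add_distrib]
    congr 1
    refine Finset.sum_congr rfl fun i _ => ?_
    have : ((k - j) i : ℕ) = k i - j i := rfl
    rw [this, Nat.cast_sub (hjk i)]
    ring
  have hRsplit : R ^ (β * ∑ i, (k i : ℝ)) = A * B := by
    rw [hsum, Real.rpow_add hR, hAdef, hBdef]
  -- split the denominator
  have hN : (∏ i, (k i).factorial) = (∏ i, (k i).choose (j i))
      * ((∏ i, (j i).factorial) * (∏ i, ((k - j) i).factorial)) := by
    rw [← Finset.prod_mul_distrib, ← Finset.prod_mul_distrib]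
    refine Finset.prod_congr rfl fun i _ => ?_
    have h1 : (k - j) i = k i - j i := rfl
    rw [h1, ← Nat.choose_mul_factorial_mul_factorial (hjk i), mul_assoc]
  have hQk : (∏ i, ((k i).factorial : ℝ))
      = P * ((∏ i, ((j i).factorial : ℝ)) * (∏ i, (((k - j) i).factorial : ℝ))) := by
    rw [hPdef]
    push_cast
    exact_mod_cast congrArg (fun n : ℕ => (n : ℝ)) hN
  have hQksplit : (∏ i, ((k i).factorial : ℝ)) ^ β = P ^ β * (Q1 * Q2) := by
    rw [hQk, Real.mul_rpow hPpos.le (by positivity), Real.mul_rpow hprod1.le hprod2.le,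
      hQ1def, hQ2def]
  rw [hRsplit, hQksplit]
  calc A * B / (P ^ β * (Q1 * Q2)) * P
      = A * B * P / (P ^ β * (Q1 * Q2)) := by ring
    _ ≤ A * B * P ^ β / (P ^ β * (Q1 * Q2)) := by
        have hd : (0:ℝ) < P ^ β * (Q1 * Q2) := by positivity
        exact (div_le_div_iff_of_pos_right hd).mpr
          (mul_le_mul_of_nonneg_left hPβ (mul_nonneg hApos.le hBpos.le))
    _ = A / Q1 * (B / Q2) := by
        field_simp

theorem gevrey_key (hβ : 1 ≤ β) (hR : 0 < R)
    (hf : ContDiff ℝ (⊤ : ℕ∞) f) (hg : ContDiff ℝ (⊤ : ℕ∞) g)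
    (hfper : Periodic2pi f) (hgper : Periodic2pi g) (k : Fin d → ℕ) :
    gevreyTerm β R (f * g) k ≤ ∑ kl ∈ Finset.HasAntidiagonal.antidiagonal k,
      gevreyTerm β R f kl.1 * gevreyTerm β R g kl.2 := by
  classical
  have hbddf : ∀ j : Fin d → ℕ, BddAbove (Set.range fun x => |gevMDeriv j f x|) := fun j =>
    Periodic2pi.bddAbove (contDiff_gevDl hf (List.finRange d) j).continuous
      (hfper.gevDl_per (List.finRange d) j)
  have hbddg : ∀ j : Fin d → ℕ, BddAbove (Set.range fun x => |gevMDeriv j g x|) := fun j =>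
    Periodic2pi.bddAbove (contDiff_gevDl hg (List.finRange d) j).continuous
      (hgper.gevDl_per (List.finRange d) j)
  have hsup : supNorm (gevMDeriv k (f * g)) ≤
      ∑ j ∈ Fintype.piFinset (fun i => Finset.range (k i + 1)),
        ((∏ i, (k i).choose (j i) : ℕ) : ℝ)
          * (supNorm (gevMDeriv j f) * supNorm (gevMDeriv (k - j) g)) := by
    rw [gevMDeriv_mul hf hg k]
    apply supNorm_le
    intro x
    have hx : (∑ j ∈ Fintype.piFinset (fun i => Finset.range (k i + 1)),
          ((∏ i, (k i).choose (j i) : ℕ) : ℝ) • (gevMDeriv j f * gevMDeriv (k - j) g)) x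
        = ∑ j ∈ Fintype.piFinset (fun i => Finset.range (k i + 1)),
          ((∏ i, (k i).choose (j i) : ℕ) : ℝ) * (gevMDeriv j f x * gevMDeriv (k - j) g x) := by
      rw [Finset.sum_apply]
      rfl
    rw [hx]
    refine (Finset.abs_sum_le_sum_abs _ _).trans (Finset.sum_le_sum fun j _ => ?_)
    rw [abs_mul, abs_mul, Nat.abs_cast]
    refine mul_le_mul_of_nonneg_left ?_ (Nat.cast_nonneg _)
    exact mul_le_mul (abs_le_supNorm (hbddf j) x) (abs_le_supNorm (hbddg (k - j)) x)
      (abs_nonneg _) (supNorm_nonneg _)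
  have hW : 0 ≤ R ^ (β * ∑ i, (k i : ℝ)) / (∏ i, ((k i).factorial : ℝ)) ^ β :=
    div_nonneg (Real.rpow_nonneg hR.le _)
      (Real.rpow_nonneg (Finset.prod_nonneg fun i _ => Nat.cast_nonneg _) _)
  calc gevreyTerm β R (f * g) k
      = R ^ (β * ∑ i, (k i : ℝ)) / (∏ i, ((k i).factorial : ℝ)) ^ β
        * supNorm (gevMDeriv k (f * g)) := rfl
    _ ≤ R ^ (β * ∑ i, (k i : ℝ)) / (∏ i, ((k i).factorial : ℝ)) ^ β
        * ∑ j ∈ Fintype.piFinset (fun i => Finset.range (k i + 1)),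
          ((∏ i, (k i).choose (j i) : ℕ) : ℝ)
            * (supNorm (gevMDeriv j f) * supNorm (gevMDeriv (k - j) g)) :=
        mul_le_mul_of_nonneg_left hsup hW
    _ = ∑ j ∈ Fintype.piFinset (fun i => Finset.range (k i + 1)),
          (R ^ (β * ∑ i, (k i : ℝ)) / (∏ i, ((k i).factorial : ℝ)) ^ β
            * ((∏ i, (k i).choose (j i) : ℕ) : ℝ))
            * (supNorm (gevMDeriv j f) * supNorm (gevMDeriv (k - j) g)) := by
        rw [Finset.mul_sum]
        exact Finset.sum_congr rfl fun j _ => by ring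
    _ ≤ ∑ j ∈ Fintype.piFinset (fun i => Finset.range (k i + 1)),
          gevreyTerm β R f j * gevreyTerm β R g (k - j) := by
        refine Finset.sum_le_sum fun j hj => ?_
        have hjk : ∀ i, j i ≤ k i := fun i =>
          Nat.lt_succ_iff.mp (Finset.mem_range.mp ((Fintype.mem_piFinset.mp hj) i))
        have h1 := gev_coeff_le hβ hR hjk
        calc (R ^ (β * ∑ i, (k i : ℝ)) / (∏ i, ((k i).factorial : ℝ)) ^ β
              * ((∏ i, (k i).choose (j i) : ℕ) : ℝ))
              * (supNorm (gevMDeriv j f) * supNorm (gevMDeriv (k - j) g))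
            ≤ ((R ^ (β * ∑ i, (j i : ℝ)) / (∏ i, ((j i).factorial : ℝ)) ^ β)
              * (R ^ (β * ∑ i, (((k - j) i : ℕ) : ℝ)) / (∏ i, (((k - j) i).factorial : ℝ)) ^ β))
              * (supNorm (gevMDeriv j f) * supNorm (gevMDeriv (k - j) g)) :=
              mul_le_mul_of_nonneg_right h1
                (mul_nonneg (supNorm_nonneg _) (supNorm_nonneg _))
          _ = gevreyTerm β R f j * gevreyTerm β R g (k - j) := by
              rw [gevreyTerm, gevreyTerm]
              ring
    _ = ∑ kl ∈ Finset.HasAntidiagonal.antidiagonal k, gevreyTerm β R f kl.1 * gevreyTerm β R g kl.2 := by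
        refine Finset.sum_bij' (fun j _ => ((j, k - j) : (Fin d → ℕ) × (Fin d → ℕ)))
          (fun kl _ => kl.1) ?_ ?_ ?_ ?_ ?_
        · intro j hj
          have hjk : ∀ i, j i ≤ k i := fun i =>
            Nat.lt_succ_iff.mp (Finset.mem_range.mp ((Fintype.mem_piFinset.mp hj) i))
          refine Finset.HasAntidiagonal.mem_antidiagonal.mpr (funext fun i => ?_)
          show j i + (k i - j i) = k i
          have := hjk i
          omega
        · intro kl hkl
          have h := Finset.HasAntidiagonal.mem_antidiagonal.mp hkl
          rw [Fintype.mem_piFinset]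
          intro i
          have := congrFun h i
          show kl.1 i ∈ Finset.range (k i + 1)
          rw [Finset.mem_range]
          have h2 : kl.1 i + kl.2 i = k i := this
          omega
        · intro j _
          rfl
        · intro kl hkl
          have h := Finset.HasAntidiagonal.mem_antidiagonal.mp hkl
          refine Prod.ext rfl ?_
          show k - kl.1 = kl.2
          funext i
          have h2 : kl.1 i + kl.2 i = k i := congrFun h i
          show k i - kl.1 i = kl.2 i
          omega
        · intro j _
          rfl

end main


/-- Banach algebra property of the Gevrey norm of Marco–Sauzin:
`‖fg‖_{β,R} ≤ ‖f‖_{β,R}·‖g‖_{β,R}`. -/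
theorem gevrey_banach_algebra (d : ℕ) (hd : 1 ≤ d) (β R : ℝ) (hβ : 1 ≤ β)
    (hR : 0 < R) (f g : (Fin d → ℝ) → ℝ)
    (hf : ContDiff ℝ (⊤ : ℕ∞) f) (hg : ContDiff ℝ (⊤ : ℕ∞) g)
    (hfper : Periodic2pi f) (hgper : Periodic2pi g)
    (hfs : Summable (gevreyTerm β R f)) (hgs : Summable (gevreyTerm β R g)) :
    Summable (gevreyTerm β R (f * g)) ∧
    gevreyNorm β R (f * g) ≤ gevreyNorm β R f * gevreyNorm β R g := by
  have ha0 : ∀ k, 0 ≤ gevreyTerm β R f k := gevreyTerm_nonneg hR β f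
  have hb0 : ∀ k, 0 ≤ gevreyTerm β R g k := gevreyTerm_nonneg hR β g
  have hab : Summable (fun x : (Fin d → ℕ) × (Fin d → ℕ) =>
      gevreyTerm β R f x.1 * gevreyTerm β R g x.2) :=
    hfs.mul_of_nonneg hgs ha0 hb0
  have hC : Summable (fun k : Fin d → ℕ => ∑ kl ∈ Finset.HasAntidiagonal.antidiagonal k,
      gevreyTerm β R f kl.1 * gevreyTerm β R g kl.2) :=
    summable_sum_mul_antidiagonal_of_summable_mul hab
  have key := gevrey_key hβ hR hf hg hfper hgper
  have S : Summable (gevreyTerm β R (f * g)) :=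
    Summable.of_nonneg_of_le (gevreyTerm_nonneg hR β (f * g)) key hC
  refine ⟨S, ?_⟩
  rw [gevreyNorm, gevreyNorm, gevreyNorm,
    Summable.tsum_mul_tsum_eq_tsum_sum_antidiagonal hfs hgs hab]
  exact Summable.tsum_le_tsum key S hC
end
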